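/- arXiv:2508.20540 — 3 statements merged into one kernel-verified Lean document; each statement's English description precedes it below -/
import Mathlib

section
/- Let F : ℝ → ℝ be a nondecreasing function and a > 0. Define u(T, θ) := −F(max{θ, a·T}) for T, θ ∈ ℝ. Then u has increasing differences in (T, θ): for all T₁ ≤ T₂ and θ₁ ≤ θ₂, u(T₂, θ₂) − u(T₁, θ₂) ≥ u(T₂, θ₁) − u(T₁, θ₁). -/
lemma max_submod (F : ℝ → ℝ) (hF : Monotone F) {b₁ b₂ θ₁ θ₂ : ℝ}
    (hb : b₁ ≤ b₂) (hθ : θ₁ ≤ θ₂) :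
    F (max θ₂ b₂) + F (max θ₁ b₁) ≤ F (max θ₁ b₂) + F (max θ₂ b₁) := by
  rcases le_total θ₂ b₁ with h1 | h1
  · rw [max_eq_right h1, max_eq_right (hθ.trans h1), max_eq_right (h1.trans hb),
      max_eq_right ((hθ.trans h1).trans hb)]
  · rw [max_eq_left h1]
    rcases le_total θ₁ b₂ with h2 | h2
    · rw [max_eq_right h2]
      have hm : max θ₁ b₁ ≤ min θ₂ b₂ := by
        simp [hθ, h2, h1, hb]
      rcases le_total θ₂ b₂ with h3 | h3
      · rw [max_eq_right h3]
        have := hF (hm.trans_eq (min_eq_left h3))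
        linarith
      · rw [max_eq_left h3]
        have := hF (hm.trans_eq (min_eq_right h3))
        linarith
    · rw [max_eq_left (h2.trans hθ), max_eq_left h2, max_eq_left (hb.trans h2)]
      linarith

/-- the moving-kink function u(T,θ) = −F(max{θ, a·T}) has increasing
differences in (T, θ). -/
theorem moving_kink_increasing_differences
    (F : ℝ → ℝ) (hF : Monotone F) (a : ℝ) (ha : 0 < a)
    (u : ℝ → ℝ → ℝ) (hu : ∀ T θ, u T θ = -F (max θ (a * T)))
    (T₁ T₂ θ₁ θ₂ : ℝ) (hT : T₁ ≤ T₂) (hθ : θ₁ ≤ θ₂) :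
    u T₂ θ₁ - u T₁ θ₁ ≤ u T₂ θ₂ - u T₁ θ₂ := by
  simp only [hu]
  have hb : a * T₁ ≤ a * T₂ := by nlinarith
  have := max_submod F hF hb hθ
  linarith
end

section
/- Let ν₁ and ν₂ be probability measures on [0,∞) such that ν₂ first-order stochastically dominates ν₁, let m : [0,∞) → [0,∞) be continuous, bounded, and weakly decreasing, and let C : [0,∞) → ℝ be C¹ with C' strictly increasing and C'(0) = 0. If e₁ > 0 solves C'(e₁) = V·∫ θ·m(θe₁) dν₁(θ) and e₂ > 0 solves C'(e₂) = V·∫ θ·m(θe₂) dν₂(θ), and the map θ ↦ θ·m(θe) is nondecreasing in θ for every e in the relevant range, then e₂ ≥ e₁. -/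
open MeasureTheory Set

/-- FOSD on lower sets. -/
lemma fosd_lowerSet (ν₁ ν₂ : Measure ℝ) [IsProbabilityMeasure ν₁] [IsProbabilityMeasure ν₂]
    (hFOSD : ∀ x : ℝ, ν₂ (Iic x) ≤ ν₁ (Iic x)) (T : Set ℝ) (hT : IsLowerSet T) :
    ν₂ T ≤ ν₁ T := by
  rcases T.eq_empty_or_nonempty with rfl | hne
  · simp
  by_cases huniv : T = univ
  · subst huniv; simp
  obtain ⟨z, hz⟩ := (Set.ne_univ_iff_exists_notMem T).mp huniv
  have hbdd : BddAbove T := ⟨z, fun x hx => le_of_not_gt fun h => hz (hT h.le hx)⟩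
  set s := sSup T with hs
  have hsub : T ⊆ Iic s := fun x hx => le_csSup hbdd hx
  by_cases hmem : s ∈ T
  · have : T = Iic s := Subset.antisymm hsub (fun x hx => hT hx hmem)
    rw [this]; exact hFOSD s
  · have hTeq : T = Iio s := by
      apply Subset.antisymm
      · intro x hx
        have hxs : x ≤ s := hsub hx
        rcases hxs.lt_or_eq with h | h
        · exact h
        · exact absurd (h ▸ hx) hmem
      · intro x hx
        obtain ⟨y, hyT, hxy⟩ := exists_lt_of_lt_csSup hne hx
        exact hT hxy.le hyT
    have hunion : Iio s = ⋃ n : ℕ, Iic (s - ((n : ℝ) + 1)⁻¹) := by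
      ext x
      simp only [mem_Iio, mem_iUnion, mem_Iic]
      constructor
      · intro hx
        obtain ⟨n, hn⟩ := exists_nat_one_div_lt (sub_pos.mpr hx)
        refine ⟨n, ?_⟩
        rw [one_div] at hn
        linarith
      · rintro ⟨n, hn⟩
        have : (0:ℝ) < ((n : ℝ) + 1)⁻¹ := by positivity
        linarith
    have hmono : Monotone fun n : ℕ => Iic (s - ((n : ℝ) + 1)⁻¹) := by
      intro a b hab
      apply Iic_subset_Iic.mpr
      have : ((b : ℝ) + 1)⁻¹ ≤ ((a : ℝ) + 1)⁻¹ := by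
        apply inv_anti₀ (by positivity)
        exact_mod_cast add_le_add_left (Nat.cast_le.mpr hab) 1
      linarith
    have key : ∀ ν : Measure ℝ, ν (Iio s) = ⨆ n : ℕ, ν (Iic (s - ((n : ℝ) + 1)⁻¹)) := by
      intro ν
      rw [hunion]
      exact Directed.measure_iUnion (Monotone.directed_le hmono)
    rw [hTeq, key ν₁, key ν₂]
    exact iSup_mono fun n => hFOSD _

/-- FOSD on upper sets. -/
lemma fosd_upperSet (ν₁ ν₂ : Measure ℝ) [IsProbabilityMeasure ν₁] [IsProbabilityMeasure ν₂]
    (hFOSD : ∀ x : ℝ, ν₂ (Iic x) ≤ ν₁ (Iic x)) (S : Set ℝ) (hS : IsUpperSet S)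
    (hSm : MeasurableSet S) :
    ν₁ S ≤ ν₂ S := by
  have hc := fosd_lowerSet ν₁ ν₂ hFOSD Sᶜ hS.compl
  have h₁ : ν₁ S = 1 - ν₁ Sᶜ := by
    rw [measure_compl hSm (measure_ne_top _ _), measure_univ]
    rw [ENNReal.sub_sub_cancel (by simp) (measure_mono (subset_univ S) |>.trans_eq (measure_univ))]
  have h₂ : ν₂ S = 1 - ν₂ Sᶜ := by
    rw [measure_compl hSm (measure_ne_top _ _), measure_univ]
    rw [ENNReal.sub_sub_cancel (by simp) (measure_mono (subset_univ S) |>.trans_eq (measure_univ))]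
  rw [h₁, h₂]
  exact tsub_le_tsub_left hc 1

/-- first-order stochastic dominance of the posterior raises the
solution of the effort first-order condition: e₂ ≥ e₁. -/
theorem fosd_raises_effort
    (ν₁ ν₂ : Measure ℝ) [IsProbabilityMeasure ν₁] [IsProbabilityMeasure ν₂]
    (hsupp₁ : ν₁ (Iio 0) = 0) (hsupp₂ : ν₂ (Iio 0) = 0)
    (hFOSD : ∀ x : ℝ, ν₂ (Iic x) ≤ ν₁ (Iic x))
    (m : ℝ → ℝ)
    (hm_cont : ContinuousOn m (Ici 0))
    (hm_nonneg : ∀ x ∈ Ici (0:ℝ), 0 ≤ m x)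
    (hm_bdd : ∃ M, ∀ x ∈ Ici (0:ℝ), m x ≤ M)
    (hm_anti : AntitoneOn m (Ici 0))
    (C C' : ℝ → ℝ)
    (hC : ∀ x ∈ Ici (0:ℝ), HasDerivAt C (C' x) x)
    (hC'0 : C' 0 = 0)
    (hC'mono : StrictMonoOn C' (Ici 0))
    (V : ℝ) (hV : 0 < V)
    (hker_mono : ∀ e : ℝ, 0 < e → MonotoneOn (fun θ => θ * m (θ * e)) (Ici 0))
    (e₁ e₂ : ℝ) (he₁ : 0 < e₁) (he₂ : 0 < e₂)
    (hfoc₁ : C' e₁ = V * ∫ θ, θ * m (θ * e₁) ∂ν₁)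
    (hfoc₂ : C' e₂ = V * ∫ θ, θ * m (θ * e₂) ∂ν₂) :
    e₁ ≤ e₂ := by
  by_contra hlt
  push_neg at hlt  -- e₂ < e₁
  -- modified kernels, monotone on all of ℝ
  set g₁ : ℝ → ℝ := fun θ => max θ 0 * m (max θ 0 * e₁) with hg₁
  set g₂ : ℝ → ℝ := fun θ => max θ 0 * m (max θ 0 * e₂) with hg₂
  have hmax : ∀ θ : ℝ, max θ 0 ∈ Ici (0:ℝ) := fun θ => le_max_right θ 0
  have hmono₁ : Monotone g₁ := fun a b hab =>
    hker_mono e₁ he₁ (hmax a) (hmax b) (max_le_max hab le_rfl)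
  have hmono₂ : Monotone g₂ := fun a b hab =>
    hker_mono e₂ he₂ (hmax a) (hmax b) (max_le_max hab le_rfl)
  have hnn₁ : ∀ θ, 0 ≤ g₁ θ := fun θ =>
    mul_nonneg (le_max_right θ 0) (hm_nonneg _ (mul_nonneg (le_max_right θ 0) he₁.le))
  have hnn₂ : ∀ θ, 0 ≤ g₂ θ := fun θ =>
    mul_nonneg (le_max_right θ 0) (hm_nonneg _ (mul_nonneg (le_max_right θ 0) he₂.le))
  have hle : ∀ θ, g₁ θ ≤ g₂ θ := by
    intro θ
    apply mul_le_mul_of_nonneg_left _ (le_max_right θ 0)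
    exact hm_anti (mul_nonneg (le_max_right θ 0) he₂.le)
      (mul_nonneg (le_max_right θ 0) he₁.le)
      (mul_le_mul_of_nonneg_left hlt.le (le_max_right θ 0))
  have hmeas₁ : Measurable g₁ := hmono₁.measurable
  have hmeas₂ : Measurable g₂ := hmono₂.measurable
  -- a.e. equality with the original kernels
  have hae : ∀ (ν : Measure ℝ), ν (Iio 0) = 0 → ∀ e : ℝ,
      (fun θ : ℝ => θ * m (θ * e)) =ᵐ[ν] (fun θ : ℝ => max θ 0 * m (max θ 0 * e)) := by
    intro ν hν e
    refine measure_mono_null ?_ hν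
    intro θ hθ
    simp only [mem_setOf_eq, mem_Iio]
    by_contra h
    push_neg at h
    exact hθ (by simp only [mem_setOf_eq]; rw [max_eq_left h])
  -- Bochner integrals in terms of lintegrals
  have hint : ∀ (ν : Measure ℝ) [IsProbabilityMeasure ν] (g : ℝ → ℝ),
      Measurable g → (∀ θ, 0 ≤ g θ) →
      ∫ θ, g θ ∂ν = (∫⁻ θ, ENNReal.ofReal (g θ) ∂ν).toReal := by
    intro ν _ g hg hgn
    exact integral_eq_lintegral_of_nonneg_ae (Filter.Eventually.of_forall hgn)
      hg.aestronglyMeasurable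
  have hi₁ : ∫ θ, θ * m (θ * e₁) ∂ν₁ = (∫⁻ θ, ENNReal.ofReal (g₁ θ) ∂ν₁).toReal := by
    rw [integral_congr_ae (hae ν₁ hsupp₁ e₁)]
    exact hint ν₁ g₁ hmeas₁ hnn₁
  have hi₂ : ∫ θ, θ * m (θ * e₂) ∂ν₂ = (∫⁻ θ, ENNReal.ofReal (g₂ θ) ∂ν₂).toReal := by
    rw [integral_congr_ae (hae ν₂ hsupp₂ e₂)]
    exact hint ν₂ g₂ hmeas₂ hnn₂
  -- lintegral comparisons
  have L₁ : (∫⁻ θ, ENNReal.ofReal (g₁ θ) ∂ν₁) ≤ ∫⁻ θ, ENNReal.ofReal (g₂ θ) ∂ν₁ :=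
    lintegral_mono fun θ => ENNReal.ofReal_le_ofReal (hle θ)
  have L₂ : (∫⁻ θ, ENNReal.ofReal (g₂ θ) ∂ν₁) ≤ ∫⁻ θ, ENNReal.ofReal (g₂ θ) ∂ν₂ := by
    rw [lintegral_eq_lintegral_meas_lt ν₁ (Filter.Eventually.of_forall hnn₂)
        hmeas₂.aemeasurable,
      lintegral_eq_lintegral_meas_lt ν₂ (Filter.Eventually.of_forall hnn₂)
        hmeas₂.aemeasurable]
    apply lintegral_mono
    intro t
    apply fosd_upperSet ν₁ ν₂ hFOSD
    · intro a b hab ha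
      exact lt_of_lt_of_le ha (hmono₂ hab)
    · exact measurableSet_lt measurable_const hmeas₂
  -- positivity of C' e₂ gives finiteness
  have hpos : 0 < C' e₂ := hC'0 ▸ hC'mono (self_mem_Ici) (le_of_lt he₂ : (0:ℝ) ≤ e₂) he₂
  have hI₂pos : 0 < (∫⁻ θ, ENNReal.ofReal (g₂ θ) ∂ν₂).toReal := by
    have : 0 < ∫ θ, θ * m (θ * e₂) ∂ν₂ := by
      by_contra h
      push_neg at h
      nlinarith [hfoc₂]
    rwa [hi₂] at this
  have hfin : (∫⁻ θ, ENNReal.ofReal (g₂ θ) ∂ν₂) ≠ ⊤ := by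
    intro h
    rw [h] at hI₂pos
    simp at hI₂pos
  have hcomp : C' e₁ ≤ C' e₂ := by
    rw [hfoc₁, hfoc₂, hi₁, hi₂]
    apply mul_le_mul_of_nonneg_left _ hV.le
    exact ENNReal.toReal_mono hfin (L₁.trans L₂)
  have : C' e₂ < C' e₁ := hC'mono he₂.le he₁.le hlt
  linarith
end

section
/- Define Φ(λ) := U_sep(λ) − U_pool(λ), where U_sep(λ) = (1 − α²)V[1 − (1 − e^{−λα√V})/(λα√V)] and U_pool(λ) = sup_{e ≥ 0}[V(1 − e^{−λe}) − e²], with V > 0 and α ∈ (0,1). Then Φ is continuous on (0,∞), Φ(λ) > 0 for all sufficiently small λ > 0, and Φ(λ) < 0 for all sufficiently large λ; hence Φ has at least one zero λ* ∈ (0,∞). -/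
open Filter Topology Set

lemma exp_neg_lip (a b : ℝ) (ha : 0 ≤ a) (hb : 0 ≤ b) :
    |Real.exp (-a) - Real.exp (-b)| ≤ |a - b| := by
  wlog h : a ≤ b generalizing a b
  · rw [abs_sub_comm, abs_sub_comm a b]; exact this b a hb ha (le_of_not_ge h)
  have h1 : Real.exp (-b) ≤ Real.exp (-a) := Real.exp_le_exp.2 (by linarith)
  have h2 : Real.exp (-b) = Real.exp (-a) * Real.exp (-(b - a)) := by
    rw [← Real.exp_add]; ring_nf
  have h3 : Real.exp (-a) ≤ 1 := Real.exp_le_one_iff.2 (by linarith)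
  have h4 : 1 - (b - a) ≤ Real.exp (-(b - a)) := by
    have := Real.add_one_le_exp (-(b - a)); linarith
  have h5 := Real.exp_pos (-a)
  rw [abs_of_nonneg (by linarith), abs_of_nonpos (by linarith)]
  nlinarith

lemma exp_neg_cubic (x : ℝ) (hx0 : 0 ≤ x) (hx1 : x ≤ 1) :
    1 - x + (5/18) * x ^ 2 ≤ Real.exp (-x) := by
  have h := Real.exp_bound (x := -x) (by rw [abs_neg, abs_of_nonneg hx0]; exact hx1) (n := 3) (by norm_num)
  rw [abs_neg, abs_of_nonneg hx0] at h
  have hs : ∑ m ∈ Finset.range 3, (-x) ^ m / (m.factorial : ℝ) = 1 - x + x ^ 2 / 2 := by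
    simp [Finset.sum_range_succ]; ring
  rw [hs] at h
  have h' := abs_sub_le_iff.1 h
  have h3 : x ^ 3 ≤ x ^ 2 := by nlinarith
  have hc : ((Nat.succ 3 : ℕ) : ℝ) / ((Nat.factorial 3 : ℕ) * (3:ℕ) : ℝ) = 2/9 := by
    norm_num [Nat.factorial]
  rw [hc] at h'
  nlinarith [h'.2]

/-- Φ = U_sep − U_pool (quadratic costs) is continuous on (0,∞),
positive for small λ, negative for large λ, hence has a zero λ* ∈ (0,∞). -/
theorem boundary_existence_quadratic
    (V α : ℝ) (hV : 0 < V) (hα₀ : 0 < α) (hα₁ : α < 1)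
    (Usep Upool Φ : ℝ → ℝ)
    (hUsep : ∀ l : ℝ, Usep l =
      (1 - α ^ 2) * V *
        (1 - (1 - Real.exp (-(l * α * Real.sqrt V))) / (l * α * Real.sqrt V)))
    (hUpool : ∀ l : ℝ, Upool l =
      ⨆ e : Ici (0:ℝ), (V * (1 - Real.exp (-(l * (e:ℝ)))) - (e:ℝ) ^ 2))
    (hΦ : ∀ l, Φ l = Usep l - Upool l) :
    ContinuousOn Φ (Ioi 0) ∧
    (∃ δ > 0, ∀ l : ℝ, 0 < l → l < δ → 0 < Φ l) ∧
    (∃ M : ℝ, ∀ l : ℝ, M < l → Φ l < 0) ∧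
    (∃ lstar : ℝ, 0 < lstar ∧ Φ lstar = 0) := by
  haveI : Nonempty (Ici (0:ℝ)) := ⟨⟨0, mem_Ici.2 le_rfl⟩⟩
  set s : ℝ := Real.sqrt V with hs_def
  have hs : 0 < s := Real.sqrt_pos.2 hV
  have hs2 : s ^ 2 = V := Real.sq_sqrt hV.le
  set g : ℝ → Ici (0:ℝ) → ℝ :=
    fun l e => V * (1 - Real.exp (-(l * (e:ℝ)))) - (e:ℝ) ^ 2 with hg_def
  have hgle : ∀ l (e : Ici (0:ℝ)), g l e ≤ V := by
    intro l e
    have h1 := Real.exp_pos (-(l * (e:ℝ)))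
    have h2 : (0:ℝ) ≤ (e:ℝ) ^ 2 := sq_nonneg _
    simp only [hg_def]
    nlinarith
  have bdd : ∀ l, BddAbove (Set.range (g l)) := by
    intro l; exact ⟨V, by rintro x ⟨e, rfl⟩; exact hgle l e⟩
  have hUp_eq : ∀ l, Upool l = ⨆ e : Ici (0:ℝ), g l e := hUpool
  have hUp0 : ∀ l, 0 ≤ Upool l := by
    intro l
    have : g l ⟨0, mem_Ici.2 le_rfl⟩ ≤ ⨆ e : Ici (0:ℝ), g l e := le_ciSup (bdd l) _
    simp only [hg_def] at this
    rw [hUp_eq l]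
    simpa using this
  -- quadratic upper bound for Upool
  have hUp_sq : ∀ l : ℝ, Upool l ≤ V ^ 2 * l ^ 2 / 4 := by
    intro l
    rw [hUp_eq l]
    apply ciSup_le
    intro e
    have h1 : 1 - l * (e:ℝ) ≤ Real.exp (-(l * (e:ℝ))) := by
      have := Real.add_one_le_exp (-(l * (e:ℝ))); linarith
    simp only [hg_def]
    nlinarith [sq_nonneg ((e:ℝ) - V * l / 2)]
  -- one-sided Lipschitz bound for Upool on [0,∞)
  have key : ∀ l l' : ℝ, 0 ≤ l → 0 ≤ l' → Upool l ≤ Upool l' + V * s * |l - l'| := by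
    intro l l' hl hl'
    rw [hUp_eq l]
    apply ciSup_le
    intro e
    rcases le_total (e:ℝ) s with he | he
    · -- e ≤ √V : use Lipschitz estimate
      have h0 : (0:ℝ) ≤ (e:ℝ) := e.2
      have hlip := exp_neg_lip (l * (e:ℝ)) (l' * (e:ℝ)) (by positivity) (by positivity)
      have habs : |l * (e:ℝ) - l' * (e:ℝ)| = (e:ℝ) * |l - l'| := by
        rw [show l * (e:ℝ) - l' * (e:ℝ) = (e:ℝ) * (l - l') by ring, abs_mul,
          abs_of_nonneg h0]
      rw [habs] at hlip
      have h2 : g l' e ≤ Upool l' := by rw [hUp_eq l']; exact le_ciSup (bdd l') e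
      have h3 : (e:ℝ) * |l - l'| ≤ s * |l - l'| :=
        mul_le_mul_of_nonneg_right he (abs_nonneg _)
      have h4 := abs_sub_le_iff.1 hlip
      simp only [hg_def] at h2 ⊢
      nlinarith [h4.2]
    · -- e > √V : term is nonpositive
      have h0 : V ≤ (e:ℝ) ^ 2 := by nlinarith
      have h1 := Real.exp_pos (-(l * (e:ℝ)))
      have h2 := hUp0 l'
      have h3 : (0:ℝ) ≤ V * s * |l - l'| := by positivity
      simp only [hg_def]
      nlinarith
  have hlipUp : LipschitzOnWith (Real.toNNReal (V * s)) Upool (Ici (0:ℝ)) := by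
    apply LipschitzOnWith.of_dist_le_mul
    intro x hx y hy
    rw [Real.dist_eq, Real.dist_eq, Real.coe_toNNReal _ (by positivity)]
    have h1 := key x y hx hy
    have h2 := key y x hy hx
    rw [abs_sub_comm y x] at h2
    rw [abs_le]
    constructor <;> nlinarith [abs_nonneg (x - y)]
  have hUpCont : ContinuousOn Upool (Ioi 0) :=
    (hlipUp.continuousOn).mono Ioi_subset_Ici_self
  -- continuity of Usep on (0,∞)
  have hUsepCont : ContinuousOn Usep (Ioi 0) := by
    have hconc : ContinuousOn
        (fun l : ℝ => (1 - α ^ 2) * V *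
          (1 - (1 - Real.exp (-(l * α * s))) / (l * α * s))) (Ioi 0) := by
      apply ContinuousOn.mul continuousOn_const
      apply ContinuousOn.sub continuousOn_const
      apply ContinuousOn.div
      · fun_prop
      · fun_prop
      · intro l hl
        have hl0 : 0 < l := hl
        positivity
    exact hconc.congr (fun l _ => hUsep l)
  have hΦCont : ContinuousOn Φ (Ioi 0) := by
    have := hUsepCont.sub hUpCont
    exact this.congr (fun l _ => hΦ l)
  -- small λ : Φ > 0
  have hα2 : α ^ 2 < 1 := by nlinarith
  have hA : 0 < (1 - α ^ 2) * V := mul_pos (by linarith) hV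
  have hsmall : ∃ δ > 0, ∀ l : ℝ, 0 < l → l < δ → 0 < Φ l := by
    refine ⟨min (1 / (α * s)) ((1 - α ^ 2) * α * s * 10 / (9 * V)), ?_, ?_⟩
    · apply lt_min
      · positivity
      · have h2 : 0 < 1 - α ^ 2 := by linarith
        positivity
    · intro l hl hlδ
      have hδ1 : l < 1 / (α * s) := lt_of_lt_of_le hlδ (min_le_left _ _)
      have hδ2 : l < (1 - α ^ 2) * α * s * 10 / (9 * V) :=
        lt_of_lt_of_le hlδ (min_le_right _ _)
      set x : ℝ := l * α * s with hx_def
      have hx : 0 < x := by positivity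
      have hx1 : x < 1 := by
        have := (lt_div_iff₀ (by positivity : (0:ℝ) < α * s)).1 hδ1
        calc x = l * (α * s) := by ring
        _ < 1 := this
      have hE := exp_neg_cubic x hx.le hx1.le
      have hdiv : (1 - Real.exp (-x)) / x ≤ 1 - 5 / 18 * x := by
        rw [div_le_iff₀ hx]; nlinarith
      have hUsep_lb : (1 - α ^ 2) * V * (5 / 18 * x) ≤ Usep l := by
        rw [hUsep l]
        have : l * α * s = x := rfl
        rw [this]
        apply mul_le_mul_of_nonneg_left _ hA.le
        linarith
      have hUpl := hUp_sq l
      have h9 : l * (9 * V) < (1 - α ^ 2) * α * s * 10 :=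
        (lt_div_iff₀ (by positivity)).1 hδ2
      rw [hΦ l]
      nlinarith [mul_lt_mul_of_pos_right h9 (mul_pos hV hl)]
  -- large λ : Φ < 0
  have hlarge : ∃ M : ℝ, ∀ l : ℝ, M < l → Φ l < 0 := by
    set e₀ : ℝ := α * s / 2 with he₀_def
    have he₀ : 0 < e₀ := by positivity
    refine ⟨max 1 (4 / (3 * α ^ 2 * e₀)), ?_⟩
    intro l hl
    have hl1 : 1 < l := lt_of_le_of_lt (le_max_left _ _) hl
    have hl0 : 0 < l := by linarith
    have hlM : 4 / (3 * α ^ 2 * e₀) < l := lt_of_le_of_lt (le_max_right _ _) hl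
    have h4 : 4 < l * (3 * α ^ 2 * e₀) := (div_lt_iff₀ (by positivity)).1 hlM
    -- Usep l ≤ (1-α²)V
    have hq : 0 ≤ (1 - Real.exp (-(l * α * s))) / (l * α * s) := by
      apply div_nonneg _ (by positivity)
      have : Real.exp (-(l * α * s)) ≤ 1 := Real.exp_le_one_iff.2 (by nlinarith)
      linarith
    have hUsep_ub : Usep l ≤ (1 - α ^ 2) * V := by
      rw [hUsep l]
      nlinarith [mul_nonneg hA.le hq]
    -- Upool l > (1-α²)V
    have hexp : Real.exp (-(l * e₀)) < 3 * α ^ 2 / 4 := by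
      have h1 : l * e₀ < Real.exp (l * e₀) := by
        have := Real.add_one_le_exp (l * e₀); linarith
      have h2 : Real.exp (-(l * e₀)) = (Real.exp (l * e₀))⁻¹ := Real.exp_neg _
      have h3 : (Real.exp (l * e₀))⁻¹ < (l * e₀)⁻¹ := by
        apply inv_strictAnti₀ (by positivity) h1
      have h4' : l * e₀ > 4 / (3 * α ^ 2) := by
        rw [gt_iff_lt, div_lt_iff₀ (by positivity)]; nlinarith
      have h5 : (l * e₀)⁻¹ < 3 * α ^ 2 / 4 := by
        rw [inv_lt_comm₀ (by positivity) (by positivity)]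
        rw [show (3 * α ^ 2 / 4)⁻¹ = 4 / (3 * α ^ 2) by field_simp]
        exact h4'
      linarith [h2 ▸ h3]
    have hUp_lb : (1 - α ^ 2) * V < Upool l := by
      have hle : g l ⟨e₀, mem_Ici.2 he₀.le⟩ ≤ Upool l := by
        rw [hUp_eq l]; exact le_ciSup (bdd l) _
      simp only [hg_def] at hle
      have he₀sq : e₀ ^ 2 = α ^ 2 * s ^ 2 / 4 := by rw [he₀_def]; ring
      rw [hs2] at he₀sq
      have hmul := mul_lt_mul_of_pos_left hexp hV
      linarith
    rw [hΦ l]; linarith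
  refine ⟨hΦCont, hsmall, hlarge, ?_⟩
  obtain ⟨δ, hδ, hPos⟩ := hsmall
  obtain ⟨M, hNeg⟩ := hlarge
  set a : ℝ := δ / 2 with ha_def
  have ha0 : 0 < a := by positivity
  have hΦa : 0 < Φ a := hPos a ha0 (by simp only [ha_def]; linarith)
  set b : ℝ := max (M + 1) (a + 1) with hb_def
  have hbM : M < b := by
    have := le_max_left (M + 1) (a + 1); simp only [hb_def]; linarith
  have hab : a ≤ b := by
    have := le_max_right (M + 1) (a + 1); simp only [hb_def]; linarith
  have hΦb : Φ b < 0 := hNeg b hbM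
  have hsub : Icc a b ⊆ Ioi 0 := fun x hx => lt_of_lt_of_le ha0 hx.1
  have hcont' : ContinuousOn Φ (Icc a b) := hΦCont.mono hsub
  have hiv := intermediate_value_Icc' hab hcont'
  obtain ⟨c, hc, hce⟩ := hiv ⟨hΦb.le, hΦa.le⟩
  exact ⟨c, lt_of_lt_of_le ha0 hc.1, hce⟩
end
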